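/- arXiv:1511.02179 — 7 statements merged into one kernel-verified Lean document; each statement's English description precedes it below -/
import Mathlib

section
/- Every positive integer N has a unique representation N = Σ_{k=1}^ℓ c_k q_{k-1} where q_k are the denominators of the continued fraction of √2 - 1 (so q_0 = 1, q_1 = 2, q_k = 2 q_{k-1} + q_{k-2}), with digits c_k ∈ {0,1,2}, c_1 ≤ 1, and c_k = 2 implying c_{k-1} = 0. -/
/-!
The Pell numbers play the role of the Fibonacci numbers in Zeckendorf's theorem. The key
estimate is that admissible digits below index `n` sum to less than `q_n`: a digit `2` at `k`
forces a `0` at `k - 1`, and `2 q_k + q_{k-1} = q_{k+1}`. Hence the leading digit of an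
expansion of length `n + 1` is the quotient of its value by `q_n`, which gives uniqueness, and
taking that quotient as leading digit and expanding the remainder gives existence.
-/

open Finset Function

def pell : ℕ → ℕ
  | 0 => 0
  | 1 => 1
  | n + 2 => 2 * pell (n + 1) + pell n

theorem pell_succ_succ (n : ℕ) : pell (n + 2) = 2 * pell (n + 1) + pell n := rfl

theorem eq_pell {q : ℕ → ℕ} (h0 : q 0 = 0) (h1 : q 1 = 1)
    (hrec : ∀ n, q (n + 2) = 2 * q (n + 1) + q n) : ∀ n, q n = pell n
  | 0 => h0
  | 1 => h1
  | n + 2 => by rw [hrec, eq_pell h0 h1 hrec n, eq_pell h0 h1 hrec (n + 1), pell_succ_succ]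

theorem pell_lt_pell_succ : ∀ n, pell n < pell (n + 1)
  | 0 => Nat.one_pos
  | n + 1 => by have := pell_lt_pell_succ n; rw [pell_succ_succ]; omega

theorem pell_strictMono : StrictMono pell := strictMono_nat_of_lt_succ pell_lt_pell_succ

theorem le_pell (n : ℕ) : n ≤ pell n := pell_strictMono.le_apply

theorem pell_pos {n : ℕ} (hn : 1 ≤ n) : 0 < pell n := hn.trans (le_pell n)

structure SilverDigits (c : ℕ → ℕ) : Prop where
  zero : c 0 = 0
  one_le : c 1 ≤ 1
  le_two : ∀ k, c k ≤ 2
  prev_eq_zero : ∀ k, 2 ≤ k → c k = 2 → c (k - 1) = 0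

namespace SilverDigits

variable {c : ℕ → ℕ}

theorem sum_range_succ_lt_pell (hc : SilverDigits c) :
    ∀ n, ∑ k ∈ range (n + 1), c k * pell k < pell (n + 1)
  | 0 => by simp [hc.zero, pell]
  | 1 => by
    simp only [sum_range_succ, sum_range_zero, hc.zero, pell]
    have := hc.one_le
    omega
  | n + 2 => by
    have ih : ∑ k ∈ range (n + 2), c k * pell k < pell (n + 2) :=
      hc.sum_range_succ_lt_pell (n + 1)
    rw [sum_range_succ, show pell (n + 2 + 1) = 2 * pell (n + 2) + pell (n + 1) from rfl]
    rcases Nat.lt_or_ge (c (n + 2)) 2 with hlt | hge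
    · have : c (n + 2) * pell (n + 2) ≤ pell (n + 2) :=
        (Nat.mul_le_mul_right _ (Nat.le_of_lt_succ hlt)).trans_eq (one_mul _)
      omega
    · have htwo : c (n + 2) = 2 := le_antisymm (hc.le_two _) hge
      have hprev : c (n + 1) = 0 := hc.prev_eq_zero (n + 2) (by omega) htwo
      have ih' := hc.sum_range_succ_lt_pell n
      rw [sum_range_succ, hprev, zero_mul, add_zero, htwo]
      omega

theorem sum_range_lt_pell (hc : SilverDigits c) {n : ℕ} (hn : 1 ≤ n) :
    ∑ k ∈ range n, c k * pell k < pell n := by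
  obtain ⟨m, rfl⟩ := Nat.exists_eq_add_of_le' hn
  exact hc.sum_range_succ_lt_pell m

theorem eq_sum_range_div_pell (hc : SilverDigits c) {n : ℕ} (hn : 1 ≤ n) :
    c n = (∑ k ∈ range (n + 1), c k * pell k) / pell n := by
  rw [sum_range_succ, Nat.add_mul_div_right _ _ (pell_pos hn),
    Nat.div_eq_of_lt (hc.sum_range_lt_pell hn), zero_add]

theorem eq_of_sum_range_eq {d : ℕ → ℕ} (hc : SilverDigits c) (hd : SilverDigits d) :
    ∀ n, ∑ k ∈ range n, c k * pell k = ∑ k ∈ range n, d k * pell k →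
      ∀ k < n, c k = d k
  | 0, _, k, hk => absurd hk (Nat.not_lt_zero k)
  | n + 1, hsum, k, hk => by
    have htop : c n = d n := by
      rcases Nat.eq_zero_or_pos n with rfl | hn
      · rw [hc.zero, hd.zero]
      · rw [hc.eq_sum_range_div_pell hn, hd.eq_sum_range_div_pell hn, hsum]
    rcases Nat.lt_succ_iff_lt_or_eq.1 hk with hk | rfl
    · rw [sum_range_succ, sum_range_succ, htop] at hsum
      exact eq_of_sum_range_eq hc hd n (Nat.add_right_cancel hsum) k hk
    · exact htop

theorem eq_of_support_subset {d : ℕ → ℕ} {n : ℕ} (hc : SilverDigits c) (hd : SilverDigits d)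
    (hcs : support c ⊆ range n) (hds : support d ⊆ range n)
    (hsum : ∑ k ∈ range n, c k * pell k = ∑ k ∈ range n, d k * pell k) : c = d := by
  funext k
  by_cases hk : k < n
  · exact hc.eq_of_sum_range_eq hd n hsum k hk
  · have hck : c k = 0 := notMem_support.1 fun h => hk (by simpa using hcs h)
    have hdk : d k = 0 := notMem_support.1 fun h => hk (by simpa using hds h)
    rw [hck, hdk]

theorem update_of_support_subset (hc : SilverDigits c) {n d : ℕ} (hsupp : support c ⊆ range n)
    (hn : 1 ≤ n) (hd : d ≤ 2) (hd_one : n = 1 → d ≤ 1) (hd_two : d = 2 → c (n - 1) = 0) :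
    SilverDigits (update c n d) where
  zero := by simpa [update_apply, (Nat.one_le_iff_ne_zero.1 hn).symm] using hc.zero
  one_le := by
    rcases eq_or_ne n 1 with rfl | hn1
    · simpa using hd_one rfl
    · simpa [update_apply, hn1.symm] using hc.one_le
  le_two k := by
    rcases eq_or_ne k n with rfl | hkn
    · simpa using hd
    · simpa [hkn] using hc.le_two k
  prev_eq_zero k hk hk2 := by
    rcases eq_or_ne k n with rfl | hkn
    · simpa [update_apply, show k - 1 ≠ k by omega] using hd_two (by simpa using hk2)
    · have hck : c k = 2 := by simpa [hkn] using hk2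
      have hkn' : k < n := by simpa using hsupp (show k ∈ support c by simp [hck])
      simpa [update_apply, show k - 1 ≠ n by omega] using hc.prev_eq_zero k hk hck

end SilverDigits

theorem support_update_subset_range {c : ℕ → ℕ} {n : ℕ} (hsupp : support c ⊆ range n)
    (d : ℕ) :
    support (update c n d) ⊆ range (n + 1) := by
  intro k hk
  rcases eq_or_ne k n with rfl | hkn
  · simp
  · have : k < n := by simpa using hsupp (show k ∈ support c by simpa [hkn] using hk)
    simpa using Nat.lt_succ_of_lt this

theorem sum_range_succ_update (c : ℕ → ℕ) (n d : ℕ) :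
    ∑ k ∈ range (n + 1), update c n d k * pell k =
      ∑ k ∈ range n, c k * pell k + d * pell n := by
  rw [sum_range_succ, update_self,
    sum_congr rfl fun k hk => by rw [update_of_ne (mem_range.1 hk).ne]]

theorem exists_silverDigits_sum_range_eq :
    ∀ n N, N < pell n → ∃ c, SilverDigits c ∧ support c ⊆ range n ∧
      ∑ k ∈ range n, c k * pell k = N
  | 0, N, hN => absurd hN (Nat.not_lt_zero N)
  | n + 1, N, hN => by
    rcases Nat.eq_zero_or_pos n with rfl | hn
    · refine ⟨0, ⟨rfl, zero_le_one, fun _ => zero_le_two, fun _ _ h => absurd h (by simp)⟩,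
        by simp, ?_⟩
      simpa [pell, eq_comm] using hN
    set d := N / pell n
    set r := N % pell n
    obtain ⟨c, hc, hsupp, hsum⟩ :=
      exists_silverDigits_sum_range_eq n r (Nat.mod_lt _ (pell_pos hn))
    have hN' : N = r + d * pell n := by rw [add_comm, mul_comm]; exact (Nat.div_add_mod N _).symm
    have hrec : pell (n + 1) = 2 * pell n + pell (n - 1) := by
      obtain ⟨m, rfl⟩ := Nat.exists_eq_add_of_le' hn; exact pell_succ_succ m
    have hle : pell (n - 1) ≤ pell n := pell_strictMono.monotone (Nat.sub_le n 1)
    have hd_le : d ≤ 2 := by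
      by_contra! h
      have : 3 * pell n ≤ d * pell n := Nat.mul_le_mul_right _ h
      omega
    have hd_one : n = 1 → d ≤ 1 := by
      rintro rfl
      simpa [d, pell, Nat.lt_succ_iff] using hN
    have hd_two : d = 2 → c (n - 1) = 0 := by
      intro hd
      have hn1 : 1 ≤ n - 1 := by have := hd_one; omega
      have hr : r < pell (n - 1) := by rw [hd] at hN'; omega
      rw [hc.eq_sum_range_div_pell hn1, Nat.sub_add_cancel hn, hsum, Nat.div_eq_of_lt hr]
    exact ⟨update c n d, hc.update_of_support_subset hsupp hn hd_le hd_one hd_two,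
      support_update_subset_range hsupp d, by rw [sum_range_succ_update, hsum, hN']⟩

theorem support_subset_range_of_finsum_eq {c : ℕ → ℕ} {N : ℕ} (hfin : (support c).Finite)
    (hN : N = ∑ᶠ k, c k * pell k) : support c ⊆ range (N + 1) := by
  intro k hk
  have hterm : c k * pell k ≤ N :=
    hN ▸ single_le_finsum k (hfin.subset (support_mul_subset_left _ _)) fun _ => Nat.zero_le _
  have : pell k ≤ c k * pell k := Nat.le_mul_of_pos_left _ (Nat.pos_of_ne_zero hk)
  simpa [Nat.lt_succ_iff] using (le_pell k).trans (this.trans hterm)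

/-- `q k` and `c k` are the paper's `q_{k-1}` and `c_k`; the unused digit `c 0` is `0`. -/
theorem silver_base_expansion_general (q : ℕ → ℕ)
    (hq0 : q 0 = 0) (hq1 : q 1 = 1)
    (hqrec : ∀ k, q (k + 2) = 2 * q (k + 1) + q k)
    (N : ℕ) :
    ∃! c : ℕ → ℕ,
      c 0 = 0 ∧ (Function.support c).Finite ∧
      c 1 ≤ 1 ∧ (∀ k, c k ≤ 2) ∧
      (∀ k, 2 ≤ k → c k = 2 → c (k - 1) = 0) ∧
      N = ∑ᶠ k, c k * q k := by
  obtain rfl : q = pell := funext (eq_pell hq0 hq1 hqrec)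
  have hsum_range {c : ℕ → ℕ} (hsupp : support c ⊆ range (N + 1)) :
      ∑ᶠ k, c k * pell k = ∑ k ∈ range (N + 1), c k * pell k :=
    finsum_eq_sum_of_support_subset _ ((support_mul_subset_left _ _).trans hsupp)
  obtain ⟨c, hc, hsupp, hsum⟩ :=
    exists_silverDigits_sum_range_eq (N + 1) N ((le_pell N).trans_lt (pell_lt_pell_succ N))
  refine ⟨c, ⟨hc.zero, (range (N + 1)).finite_toSet.subset hsupp, hc.one_le, hc.le_two,
    hc.prev_eq_zero, by rw [hsum_range hsupp, hsum]⟩, ?_⟩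
  rintro d ⟨h0, hfin, h1, h2, h3, hN⟩
  have hd : SilverDigits d := ⟨h0, h1, h2, h3⟩
  have hdsupp := support_subset_range_of_finsum_eq hfin hN
  exact hd.eq_of_support_subset hc hdsupp hsupp (by rw [← hsum_range hdsupp, ← hN, hsum])

/-- Unique base-(√2 - 1) expansion: `q k` denotes the paper's `q_{k-1}`, the
Pell denominators `q 1 = 1, q 2 = 2, q (k+2) = 2 q (k+1) + q k`.  Digits are
encoded as a finitely supported sequence `c` with `c 0 = 0`. -/
theorem silver_base_expansion (q : ℕ → ℕ)
    (hq0 : q 0 = 0) (hq1 : q 1 = 1)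
    (hqrec : ∀ k, q (k + 2) = 2 * q (k + 1) + q k)
    (N : ℕ) (hN : 1 ≤ N) :
    ∃! c : ℕ → ℕ,
      c 0 = 0 ∧ (Function.support c).Finite ∧
      c 1 ≤ 1 ∧ (∀ k, c k ≤ 2) ∧
      (∀ k, 2 ≤ k → c k = 2 → c (k - 1) = 0) ∧
      N = ∑ᶠ k, c k * q k :=
  silver_base_expansion_general q hq0 hq1 hqrec N
end

section
/- For every nonzero integer Z, there exists ℓ ≥ 1 and a sequence of digits (b_k)_{k=1}^ℓ of nonnegative integers such that Z = Σ_{k=1}^ℓ b_k q*_{k-1}, where b_k ≤ a_k for all k and b_k = a_k implies b_{k+1} = 0. -/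
namespace BaseNegAlphaAux

/-- Admissible digit sequence supported on `[1, n]`. -/
def Good (a : ℕ → ℕ) (n : ℕ) (b : ℕ → ℕ) : Prop :=
  (∀ k, k = 0 ∨ n < k → b k = 0) ∧ (∀ k, 1 ≤ k → b k ≤ a k) ∧
  (∀ k, 1 ≤ k → k < n → b k = a k → b (k + 1) = 0)

/-- Partial signed sum. -/
def S (q b : ℕ → ℕ) (n : ℕ) : ℤ :=
  ∑ k ∈ Finset.Icc 1 n, (b k : ℤ) * (-1) ^ (k + 1) * (q k : ℤ)

lemma good_succ {a : ℕ → ℕ} {n : ℕ} {b : ℕ → ℕ} (hb : Good a n b) :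
    Good a (n + 1) b := by
  obtain ⟨h0, h1, h2⟩ := hb
  refine ⟨fun k hk => h0 k (by omega), h1, fun k hk1 hk2 hk3 => ?_⟩
  rcases lt_or_ge k n with h | h
  · exact h2 k hk1 h hk3
  · exact h0 (k + 1) (Or.inr (by omega))

lemma S_succ_zero {q b : ℕ → ℕ} {n : ℕ} (hb : b (n + 1) = 0) :
    S q b (n + 1) = S q b n := by
  unfold S
  rw [Finset.sum_Icc_succ_top (by omega), hb]
  simp

lemma good_extend {a : ℕ → ℕ} {n : ℕ} {b : ℕ → ℕ} (hb : Good a n b) (c : ℕ)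
    (hc : c ≤ a (n + 1)) (hfull : 1 ≤ n → b n < a n) :
    Good a (n + 1) (Function.update b (n + 1) c) := by
  obtain ⟨h0, h1, h2⟩ := hb
  refine ⟨fun k hk => ?_, fun k hk => ?_, fun k hk1 hk2 hk3 => ?_⟩
  · rw [Function.update_of_ne (by omega)]
    exact h0 k (by omega)
  · rcases eq_or_ne k (n + 1) with rfl | hne
    · rwa [Function.update_self]
    · rw [Function.update_of_ne hne]; exact h1 k hk
  · rcases lt_or_ge k n with h | h
    · rw [Function.update_of_ne (show k ≠ n + 1 by omega)] at hk3
      rw [Function.update_of_ne (show k + 1 ≠ n + 1 by omega)]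
      exact h2 k hk1 h hk3
    · have hkn : k = n := by omega
      rw [Function.update_of_ne (show k ≠ n + 1 by omega), hkn] at hk3
      exact absurd hk3 (Nat.ne_of_lt (hfull (by omega)))

lemma S_extend (q : ℕ → ℕ) {n : ℕ} (b : ℕ → ℕ) (c : ℕ) :
    S q (Function.update b (n + 1) c) (n + 1)
      = S q b n + (c : ℤ) * (-1) ^ n * (q (n + 1) : ℤ) := by
  unfold S
  rw [Finset.sum_Icc_succ_top (by omega)]
  congr 1
  · refine Finset.sum_congr rfl fun k hk => ?_
    rw [Finset.mem_Icc] at hk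
    rw [Function.update_of_ne (by omega)]
  · rw [Function.update_self]
    have : ((-1 : ℤ)) ^ (n + 1 + 1) = (-1) ^ n := by
      rw [pow_succ, pow_succ]; ring
    rw [this]

section

variable {a q : ℕ → ℕ}

lemma q_pos (ha : ∀ k, 1 ≤ k → 1 ≤ a k) (hq1 : q 1 = 1)
    (hqrec : ∀ k, q (k + 2) = a (k + 1) * q (k + 1) + q k) :
    ∀ k, 1 ≤ q (k + 1) := by
  intro k
  induction k with
  | zero => simp [hq1]
  | succ k ih =>
    rw [hqrec]
    have h1 := ha (k + 1) (by omega)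
    nlinarith

lemma q_growth (ha : ∀ k, 1 ≤ k → 1 ≤ a k) (hq1 : q 1 = 1)
    (hqrec : ∀ k, q (k + 2) = a (k + 1) * q (k + 1) + q k) :
    ∀ k, k ≤ q (k + 1) := by
  intro k
  induction k with
  | zero => omega
  | succ k ih =>
    rw [hqrec]
    have h1 := ha (k + 1) (by omega)
    rcases Nat.eq_zero_or_pos k with rfl | hk
    · have := q_pos ha hq1 hqrec 1
      nlinarith
    · have hqk : 1 ≤ q k := by
        obtain ⟨m, rfl⟩ := Nat.exists_eq_succ_of_ne_zero (by omega : k ≠ 0)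
        exact q_pos ha hq1 hqrec m
      nlinarith

set_option maxHeartbeats 2000000 in
/-- Main inductive lemma: on `[1,n]`, the admissible sums realize the stated
interval (`S` version), and even realize the slightly smaller interval with a
non-full top digit (`T` version). -/
lemma main (ha : ∀ k, 1 ≤ k → 1 ≤ a k) (hq0 : q 0 = 0) (hq1 : q 1 = 1)
    (hqrec : ∀ k, q (k + 2) = a (k + 1) * q (k + 1) + q k) :
    ∀ n : ℕ, ∀ Z : ℤ,
      ((if Even n then 1 - (q (n + 1) : ℤ) ≤ Z ∧ Z ≤ (q n : ℤ)
          else 1 - (q n : ℤ) ≤ Z ∧ Z ≤ (q (n + 1) : ℤ)) →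
        ∃ b, Good a n b ∧ S q b n = Z) ∧
      ((if Even n then 1 - (q (n + 1) : ℤ) + (q n : ℤ) ≤ Z ∧ Z ≤ (q n : ℤ)
          else 1 - (q n : ℤ) ≤ Z ∧ Z ≤ (q (n + 1) : ℤ) - (q n : ℤ)) →
        ∃ b, (Good a n b ∧ S q b n = Z) ∧ (1 ≤ n → b n < a n)) := by
  intro n
  induction n with
  | zero =>
    intro Z
    have e1 : q (0 + 1) = 1 := hq1
    have e0 : q 0 = 0 := hq0
    constructor
    · rw [if_pos (by simp)]
      rintro ⟨h1, h2⟩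
      have hz : Z = 0 := by omega
      refine ⟨fun _ => 0, ⟨fun k _ => rfl, fun k _ => Nat.zero_le _, fun k hk1 hk2 _ => by omega⟩, ?_⟩
      rw [hz]; simp [S]
    · rw [if_pos (by simp)]
      rintro ⟨h1, h2⟩
      have hz : Z = 0 := by omega
      refine ⟨fun _ => 0, ⟨⟨fun k _ => rfl, fun k _ => Nat.zero_le _, fun k hk1 hk2 _ => by omega⟩, ?_⟩, fun h => by omega⟩
      rw [hz]; simp [S]
  | succ n IH =>
    intro Z
    have hD : (0 : ℤ) < (q (n + 1) : ℤ) := by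
      exact_mod_cast q_pos ha hq1 hqrec n
    have hrec : (q (n + 2) : ℤ) = (a (n + 1) : ℤ) * (q (n + 1) : ℤ) + (q n : ℤ) := by
      rw [hqrec n]; push_cast; ring
    have haD : (1 : ℤ) ≤ (a (n + 1) : ℤ) := by exact_mod_cast ha (n + 1) (by omega)
    rcases Nat.even_or_odd n with he | ho
    -- Case n even, n+1 odd, the new term has sign +1
    · have hne : ¬ Even (n + 1) := by simpa [Nat.even_add_one] using he
      have hsign : ((-1 : ℤ)) ^ n = 1 := he.neg_one_pow
      rw [if_neg hne, if_neg hne]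
      set D : ℤ := (q (n + 1) : ℤ) with hDdef
      -- common construction for the "deep" subcase
      have key : ∀ Zv : ℤ, (q n : ℤ) < Zv →
          ∃ c : ℤ, 1 ≤ c ∧ Zv ≤ (q n : ℤ) + c * D ∧ (q n : ℤ) + (c - 1) * D < Zv := by
        intro Zv hZv
        set X : ℤ := Zv - (q n : ℤ) - 1 with hXdef
        have hX : 0 ≤ X := by omega
        refine ⟨X / D + 1, ?_, ?_, ?_⟩
        · have := Int.ediv_nonneg hX hD.le; omega
        · have e1 := Int.mul_ediv_add_emod X D
          have e3 := Int.emod_lt_of_pos X hD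
          nlinarith [Int.mul_ediv_add_emod X D]
        · have e1 := Int.mul_ediv_add_emod X D
          have e2 := Int.emod_nonneg X hD.ne'
          nlinarith
      constructor
      · rintro ⟨h1, h2⟩
        by_cases hc : Z ≤ (q n : ℤ)
        · obtain ⟨b, hb, hs⟩ := (IH Z).1 (by rw [if_pos he]; exact ⟨h1, hc⟩)
          exact ⟨b, good_succ hb, by rw [S_succ_zero (hb.1 (n + 1) (by omega))]; exact hs⟩
        · push_neg at hc
          obtain ⟨c, hc1, hc2, hc3⟩ := key Z hc
          have hca : c ≤ (a (n + 1) : ℤ) := by nlinarith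
          obtain ⟨b, ⟨hbG, hbS⟩, hbT⟩ := (IH (Z - c * D)).2 (by
            rw [if_pos he]
            constructor
            · nlinarith
            · nlinarith)
          refine ⟨Function.update b (n + 1) c.toNat, ?_, ?_⟩
          · refine good_extend hbG c.toNat ?_ hbT
            rw [← Nat.cast_le (α := ℤ), Int.toNat_of_nonneg (by omega)]
            exact hca
          · rw [S_extend, hbS, hsign, Int.toNat_of_nonneg (by omega)]
            ring
      · rintro ⟨h1, h2⟩
        by_cases hc : Z ≤ (q n : ℤ)
        · obtain ⟨b, hb, hs⟩ := (IH Z).1 (by rw [if_pos he]; exact ⟨h1, hc⟩)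
          refine ⟨b, ⟨good_succ hb, by rw [S_succ_zero (hb.1 (n + 1) (by omega))]; exact hs⟩, fun _ => ?_⟩
          rw [hb.1 (n + 1) (by omega)]
          exact ha (n + 1) (by omega)
        · push_neg at hc
          obtain ⟨c, hc1, hc2, hc3⟩ := key Z hc
          have hca : c ≤ (a (n + 1) : ℤ) - 1 := by nlinarith
          obtain ⟨b, ⟨hbG, hbS⟩, hbT⟩ := (IH (Z - c * D)).2 (by
            rw [if_pos he]
            constructor
            · nlinarith
            · nlinarith)
          refine ⟨Function.update b (n + 1) c.toNat, ⟨?_, ?_⟩, fun _ => ?_⟩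
          · refine good_extend hbG c.toNat ?_ hbT
            rw [← Nat.cast_le (α := ℤ), Int.toNat_of_nonneg (by omega)]
            omega
          · rw [S_extend, hbS, hsign, Int.toNat_of_nonneg (by omega)]
            ring
          · rw [Function.update_self, ← Nat.cast_lt (α := ℤ), Int.toNat_of_nonneg (by omega)]
            omega
    -- Case n odd, n+1 even, the new term has sign -1
    · have hne' : Even (n + 1) := by simpa [Nat.even_add_one] using (Nat.not_even_iff_odd.mpr ho)
      have hno : ¬ Even n := (Nat.not_even_iff_odd.mpr ho)
      have hsign : ((-1 : ℤ)) ^ n = -1 := ho.neg_one_pow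
      rw [if_pos hne', if_pos hne']
      set D : ℤ := (q (n + 1) : ℤ) with hDdef
      have key : ∀ Zv : ℤ, Zv < 1 - (q n : ℤ) →
          ∃ c : ℤ, 1 ≤ c ∧ 1 - (q n : ℤ) ≤ Zv + c * D ∧ Zv + (c - 1) * D < 1 - (q n : ℤ) := by
        intro Zv hZv
        set X : ℤ := -Zv - (q n : ℤ) with hXdef
        have hX : 0 ≤ X := by omega
        refine ⟨X / D + 1, ?_, ?_, ?_⟩
        · have := Int.ediv_nonneg hX hD.le; omega
        · have e1 := Int.mul_ediv_add_emod X D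
          have e3 := Int.emod_lt_of_pos X hD
          nlinarith
        · have e1 := Int.mul_ediv_add_emod X D
          have e2 := Int.emod_nonneg X hD.ne'
          nlinarith
      constructor
      · rintro ⟨h1, h2⟩
        by_cases hc : 1 - (q n : ℤ) ≤ Z
        · obtain ⟨b, hb, hs⟩ := (IH Z).1 (by rw [if_neg hno]; exact ⟨hc, h2⟩)
          exact ⟨b, good_succ hb, by rw [S_succ_zero (hb.1 (n + 1) (by omega))]; exact hs⟩
        · push_neg at hc
          obtain ⟨c, hc1, hc2, hc3⟩ := key Z hc
          have hca : c ≤ (a (n + 1) : ℤ) := by nlinarith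
          obtain ⟨b, ⟨hbG, hbS⟩, hbT⟩ := (IH (Z + c * D)).2 (by
            rw [if_neg hno]
            constructor
            · nlinarith
            · nlinarith)
          refine ⟨Function.update b (n + 1) c.toNat, ?_, ?_⟩
          · refine good_extend hbG c.toNat ?_ hbT
            rw [← Nat.cast_le (α := ℤ), Int.toNat_of_nonneg (by omega)]
            exact hca
          · rw [S_extend, hbS, hsign, Int.toNat_of_nonneg (by omega)]
            ring
      · rintro ⟨h1, h2⟩
        by_cases hc : 1 - (q n : ℤ) ≤ Z
        · obtain ⟨b, hb, hs⟩ := (IH Z).1 (by rw [if_neg hno]; exact ⟨hc, h2⟩)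
          refine ⟨b, ⟨good_succ hb, by rw [S_succ_zero (hb.1 (n + 1) (by omega))]; exact hs⟩, fun _ => ?_⟩
          rw [hb.1 (n + 1) (by omega)]
          exact ha (n + 1) (by omega)
        · push_neg at hc
          obtain ⟨c, hc1, hc2, hc3⟩ := key Z hc
          have hca : c ≤ (a (n + 1) : ℤ) - 1 := by nlinarith
          obtain ⟨b, ⟨hbG, hbS⟩, hbT⟩ := (IH (Z + c * D)).2 (by
            rw [if_neg hno]
            constructor
            · nlinarith
            · nlinarith)
          refine ⟨Function.update b (n + 1) c.toNat, ⟨?_, ?_⟩, fun _ => ?_⟩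
          · refine good_extend hbG c.toNat ?_ hbT
            rw [← Nat.cast_le (α := ℤ), Int.toNat_of_nonneg (by omega)]
            omega
          · rw [S_extend, hbS, hsign, Int.toNat_of_nonneg (by omega)]
            ring
          · rw [Function.update_self, ← Nat.cast_lt (α := ℤ), Int.toNat_of_nonneg (by omega)]
            omega

end

end BaseNegAlphaAux

/-- Existence of the base-(-α) expansion of a nonzero integer.
Here `q k` is the paper's `q_{k-1}`, and the paper's signed base
`q*_{k-1}` equals `(-1)^{k+1} * q k`. -/
theorem base_neg_alpha_existence (a q : ℕ → ℕ)
    (ha : ∀ k, 1 ≤ k → 1 ≤ a k)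
    (hq0 : q 0 = 0) (hq1 : q 1 = 1)
    (hqrec : ∀ k, q (k + 2) = a (k + 1) * q (k + 1) + q k)
    (Z : ℤ) (hZ : Z ≠ 0) :
    ∃ ℓ, 1 ≤ ℓ ∧ ∃ b : ℕ → ℕ,
      Z = ∑ k ∈ Finset.Icc 1 ℓ, (b k : ℤ) * (-1) ^ (k + 1) * (q k : ℤ) ∧
      (∀ k, 1 ≤ k → b k ≤ a k) ∧
      (∀ k, 1 ≤ k → b k = a k → b (k + 1) = 0) := by
  set n : ℕ := 2 * (Z.natAbs + 1) with hn
  have hEven : Even n := ⟨Z.natAbs + 1, by omega⟩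
  have hg1 : ((n - 1 : ℕ) : ℤ) ≤ (q n : ℤ) := by
    have h := BaseNegAlphaAux.q_growth ha hq1 hqrec (n - 1)
    have hn1 : n - 1 + 1 = n := by omega
    rw [hn1] at h
    exact_mod_cast h
  have hg2 : (n : ℤ) ≤ (q (n + 1) : ℤ) := by
    exact_mod_cast BaseNegAlphaAux.q_growth ha hq1 hqrec n
  obtain ⟨b, hbG, hbS⟩ := (BaseNegAlphaAux.main ha hq0 hq1 hqrec n Z).1 (by
    rw [if_pos hEven]
    constructor
    · omega
    · omega)
  refine ⟨n, by omega, b, hbS.symm, hbG.2.1, fun k hk hke => ?_⟩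
  rcases lt_or_ge k n with h | h
  · exact hbG.2.2 k hk h hke
  · exact hbG.1 (k + 1) (Or.inr (by omega))
end

section
/- If (b_k)_{k=1}^ℓ and (b̂_k)_{k=1}^{ℓ'} are two (-α)-admissible digit sequences (padded with zeros) with Σ b_k q*_{k-1} = Σ b̂_k q*_{k-1}, then b_k = b̂_k for all k. That is, the alternating Ostrowski expansion of an integer is unique. -/
/-- Coarse bounds for admissible sums. -/
lemma aux_bounds (a q : ℕ → ℕ)
    (hq0 : q 0 = 0) (hq1 : q 1 = 1)
    (hqrec : ∀ k, q (k + 2) = a (k + 1) * q (k + 1) + q k)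
    (b : ℕ → ℕ) (hble : ∀ k, 1 ≤ k → b k ≤ a k) :
    ∀ n, (∑ k ∈ Finset.Icc 1 n, (b k : ℤ) * (-1) ^ (k + 1) * (q k : ℤ)
            ≤ if Even n then (q n : ℤ) else (q (n + 1) : ℤ))
       ∧ (-((if Even n then (q (n + 1) : ℤ) else (q n : ℤ)) - 1)
            ≤ ∑ k ∈ Finset.Icc 1 n, (b k : ℤ) * (-1) ^ (k + 1) * (q k : ℤ)) := by
  intro n
  induction n with
  | zero => simp [hq0, hq1]
  | succ n ih =>
    have hsplit : ∑ k ∈ Finset.Icc 1 (n + 1), (b k : ℤ) * (-1) ^ (k + 1) * (q k : ℤ)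
        = (∑ k ∈ Finset.Icc 1 n, (b k : ℤ) * (-1) ^ (k + 1) * (q k : ℤ))
          + (b (n + 1) : ℤ) * (-1) ^ (n + 2) * (q (n + 1) : ℤ) :=
      Finset.sum_Icc_succ_top (by omega) _
    have hb : (b (n + 1) : ℤ) ≤ (a (n + 1) : ℤ) := by
      exact_mod_cast hble (n + 1) (by omega)
    have hb0 : (0 : ℤ) ≤ (b (n + 1) : ℤ) := by positivity
    have hqn : (0 : ℤ) ≤ (q (n + 1) : ℤ) := by positivity
    have hrec : (q (n + 2) : ℤ) = (a (n + 1) : ℤ) * (q (n + 1) : ℤ) + (q n : ℤ) := by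
      exact_mod_cast congrArg (Nat.cast : ℕ → ℤ) (hqrec n)
    rcases Nat.even_or_odd n with hn | hn
    · -- n even, n+1 odd, sign of top term is +1
      obtain ⟨t, ht⟩ := hn
      have hsgn : ((-1 : ℤ)) ^ (n + 2) = 1 := by
        have : Even (n + 2) := ⟨t + 1, by omega⟩
        exact this.neg_one_pow
      have hmE : Even n := ⟨t, ht⟩
      have hNE : ¬ Even (n + 1) := by
        simp [Nat.even_add_one, hmE]
      rw [hsplit, hsgn, if_neg hNE, if_neg hNE]
      rw [if_pos hmE, if_pos hmE] at ih
      constructor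
      · have h1 : (b (n + 1) : ℤ) * (q (n + 1) : ℤ) ≤ (a (n + 1) : ℤ) * (q (n + 1) : ℤ) :=
          mul_le_mul_of_nonneg_right hb hqn
        nlinarith [ih.1]
      · nlinarith [ih.2]
    · -- n odd, n+1 even, sign of top term is -1
      obtain ⟨t, ht⟩ := hn
      have hsgn : ((-1 : ℤ)) ^ (n + 2) = -1 := by
        have : Odd (n + 2) := ⟨t + 1, by omega⟩
        exact this.neg_one_pow
      have hNE : Even (n + 1) := ⟨t + 1, by omega⟩
      have hnE : ¬ Even n := by
        rcases Nat.even_or_odd n with h | h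
        · exfalso; obtain ⟨s, hs⟩ := h; omega
        · exact (Nat.not_even_iff_odd.mpr h)
      rw [hsplit, hsgn, if_pos hNE, if_pos hNE]
      rw [if_neg hnE, if_neg hnE] at ih
      constructor
      · nlinarith [ih.1]
      · have h1 : (b (n + 1) : ℤ) * (q (n + 1) : ℤ) ≤ (a (n + 1) : ℤ) * (q (n + 1) : ℤ) :=
          mul_le_mul_of_nonneg_right hb hqn
        nlinarith [ih.2]

lemma aux_qpos (a q : ℕ → ℕ) (hq1 : q 1 = 1)
    (hqrec : ∀ k, q (k + 2) = a (k + 1) * q (k + 1) + q k)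
    (ha : ∀ k, 1 ≤ k → 1 ≤ a k) :
    ∀ k, 1 ≤ q (k + 1) := by
  intro k
  induction k with
  | zero => simp [hq1]
  | succ n ih =>
    have := hqrec n
    have := ha (n + 1) (by omega)
    nlinarith

set_option maxHeartbeats 1000000 in
/-- Top digit comparison. -/
lemma aux_key (a q : ℕ → ℕ)
    (ha : ∀ k, 1 ≤ k → 1 ≤ a k)
    (hq0 : q 0 = 0) (hq1 : q 1 = 1)
    (hqrec : ∀ k, q (k + 2) = a (k + 1) * q (k + 1) + q k)
    (b b' : ℕ → ℕ)
    (hble : ∀ k, 1 ≤ k → b k ≤ a k)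
    (hbM : ∀ k, 1 ≤ k → b k = a k → b (k + 1) = 0)
    (hb'le : ∀ k, 1 ≤ k → b' k ≤ a k)
    (n : ℕ)
    (hsum : ∑ k ∈ Finset.Icc 1 (n + 1), (b k : ℤ) * (-1) ^ (k + 1) * (q k : ℤ)
          = ∑ k ∈ Finset.Icc 1 (n + 1), (b' k : ℤ) * (-1) ^ (k + 1) * (q k : ℤ)) :
    b (n + 1) ≤ b' (n + 1) := by
  by_contra hcon
  push_neg at hcon
  rcases n with _ | m
  · -- length 1
    simp only [Finset.Icc_self, Finset.sum_singleton, hq1] at hsum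
    norm_num at hsum
    have hcon' : b' 1 < b 1 := hcon
    omega
  · -- top index m + 2
    have hsplitb : ∑ k ∈ Finset.Icc 1 (m + 2), (b k : ℤ) * (-1) ^ (k + 1) * (q k : ℤ)
        = (∑ k ∈ Finset.Icc 1 (m + 1), (b k : ℤ) * (-1) ^ (k + 1) * (q k : ℤ))
          + (b (m + 2) : ℤ) * (-1) ^ (m + 3) * (q (m + 2) : ℤ) :=
      Finset.sum_Icc_succ_top (by omega) _
    have hsplitb' : ∑ k ∈ Finset.Icc 1 (m + 2), (b' k : ℤ) * (-1) ^ (k + 1) * (q k : ℤ)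
        = (∑ k ∈ Finset.Icc 1 (m + 1), (b' k : ℤ) * (-1) ^ (k + 1) * (q k : ℤ))
          + (b' (m + 2) : ℤ) * (-1) ^ (m + 3) * (q (m + 2) : ℤ) :=
      Finset.sum_Icc_succ_top (by omega) _
    have hsplitbm : ∑ k ∈ Finset.Icc 1 (m + 1), (b k : ℤ) * (-1) ^ (k + 1) * (q k : ℤ)
        = (∑ k ∈ Finset.Icc 1 m, (b k : ℤ) * (-1) ^ (k + 1) * (q k : ℤ))
          + (b (m + 1) : ℤ) * (-1) ^ (m + 2) * (q (m + 1) : ℤ) :=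
      Finset.sum_Icc_succ_top (by omega) _
    -- b (m+2) ≥ 1, hence b (m+1) ≤ a (m+1) - 1
    have hcon2 : b' (m + 2) < b (m + 2) := hcon
    have hbtop : 1 ≤ b (m + 2) := by omega
    have hbprev : b (m + 1) + 1 ≤ a (m + 1) := by
      have h1 := hble (m + 1) (by omega)
      rcases eq_or_lt_of_le h1 with h | h
      · have := hbM (m + 1) (by omega) h; omega
      · omega
    have hd : (b' (m + 2) : ℤ) + 1 ≤ (b (m + 2) : ℤ) := by exact_mod_cast hcon2
    have hrec : (q (m + 2) : ℤ) = (a (m + 1) : ℤ) * (q (m + 1) : ℤ) + (q m : ℤ) := by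
      exact_mod_cast congrArg (Nat.cast : ℕ → ℤ) (hqrec m)
    have hq2pos : (1 : ℤ) ≤ (q (m + 2) : ℤ) := by
      exact_mod_cast aux_qpos a q hq1 hqrec ha (m + 1)
    have hq1nn : (0 : ℤ) ≤ (q (m + 1) : ℤ) := by positivity
    have hbprevZ : (b (m + 1) : ℤ) + 1 ≤ (a (m + 1) : ℤ) := by exact_mod_cast hbprev
    have hCBm := aux_bounds a q hq0 hq1 hqrec b hble m
    have hCB' := aux_bounds a q hq0 hq1 hqrec b' hb'le (m + 1)
    have hprod : ((b (m + 2) : ℤ) - (b' (m + 2) : ℤ) - 1) * (q (m + 2) : ℤ) ≥ 0 :=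
      mul_nonneg (by linarith) (by linarith)
    have hprod2 : ((a (m + 1) : ℤ) - 1 - (b (m + 1) : ℤ)) * (q (m + 1) : ℤ) ≥ 0 :=
      mul_nonneg (by linarith) hq1nn
    rcases Nat.even_or_odd m with hm | hm
    · -- m even: top sign (-1)^(m+3) = -1, sign at m+1 is +1
      obtain ⟨t, ht⟩ := hm
      have hs1 : ((-1 : ℤ)) ^ (m + 3) = -1 := Odd.neg_one_pow ⟨t + 1, by omega⟩
      have hs2 : ((-1 : ℤ)) ^ (m + 2) = 1 := Even.neg_one_pow ⟨t + 1, by omega⟩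
      have hmE : Even m := ⟨t, ht⟩
      have hm1E : ¬ Even (m + 1) := by simp [Nat.even_add_one, hmE]
      rw [if_pos hmE, if_pos hmE] at hCBm
      rw [if_neg hm1E, if_neg hm1E] at hCB'
      rw [hsplitb, hsplitb', hsplitbm, hs1, hs2] at hsum
      nlinarith [hCBm.1, hCB'.2, hprod, hprod2, hrec, hq2pos]
    · -- m odd: top sign +1, sign at m+1 is -1
      obtain ⟨t, ht⟩ := hm
      have hs1 : ((-1 : ℤ)) ^ (m + 3) = 1 := Even.neg_one_pow ⟨t + 2, by omega⟩
      have hs2 : ((-1 : ℤ)) ^ (m + 2) = -1 := Odd.neg_one_pow ⟨t + 1, by omega⟩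
      have hmE : ¬ Even m := by
        intro h; obtain ⟨s, hs⟩ := h; omega
      have hm1E : Even (m + 1) := ⟨t + 1, by omega⟩
      rw [if_neg hmE, if_neg hmE] at hCBm
      rw [if_pos hm1E, if_pos hm1E] at hCB'
      rw [hsplitb, hsplitb', hsplitbm, hs1, hs2] at hsum
      nlinarith [hCBm.2, hCB'.1, hprod, hprod2, hrec, hq2pos]

/-- Uniqueness of the base-(-α) (alternating Ostrowski) expansion: two
(-α)-admissible digit sequences of the same (padded) length with equal value
agree.  Here `q k` is the paper's `q_{k-1}`, and the signed base
`q*_{k-1} = (-1)^{k+1} q k`. -/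
theorem base_neg_alpha_uniqueness (a q : ℕ → ℕ)
    (ha : ∀ k, 1 ≤ k → 1 ≤ a k)
    (hq0 : q 0 = 0) (hq1 : q 1 = 1)
    (hqrec : ∀ k, q (k + 2) = a (k + 1) * q (k + 1) + q k)
    (ℓ : ℕ) (b b' : ℕ → ℕ)
    (hble : ∀ k, 1 ≤ k → b k ≤ a k)
    (hbM : ∀ k, 1 ≤ k → b k = a k → b (k + 1) = 0)
    (hb'le : ∀ k, 1 ≤ k → b' k ≤ a k)
    (hb'M : ∀ k, 1 ≤ k → b' k = a k → b' (k + 1) = 0)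
    (hsum : ∑ k ∈ Finset.Icc 1 ℓ, (b k : ℤ) * (-1) ^ (k + 1) * (q k : ℤ)
          = ∑ k ∈ Finset.Icc 1 ℓ, (b' k : ℤ) * (-1) ^ (k + 1) * (q k : ℤ)) :
    ∀ k ∈ Finset.Icc 1 ℓ, b k = b' k := by
  induction ℓ with
  | zero => intro k hk; simp at hk
  | succ n ih =>
    have htop : b (n + 1) = b' (n + 1) :=
      le_antisymm
        (aux_key a q ha hq0 hq1 hqrec b b' hble hbM hb'le n hsum)
        (aux_key a q ha hq0 hq1 hqrec b' b hb'le hb'M hble n hsum.symm)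
    have hsplitb : ∑ k ∈ Finset.Icc 1 (n + 1), (b k : ℤ) * (-1) ^ (k + 1) * (q k : ℤ)
        = (∑ k ∈ Finset.Icc 1 n, (b k : ℤ) * (-1) ^ (k + 1) * (q k : ℤ))
          + (b (n + 1) : ℤ) * (-1) ^ (n + 2) * (q (n + 1) : ℤ) :=
      Finset.sum_Icc_succ_top (by omega) _
    have hsplitb' : ∑ k ∈ Finset.Icc 1 (n + 1), (b' k : ℤ) * (-1) ^ (k + 1) * (q k : ℤ)
        = (∑ k ∈ Finset.Icc 1 n, (b' k : ℤ) * (-1) ^ (k + 1) * (q k : ℤ))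
          + (b' (n + 1) : ℤ) * (-1) ^ (n + 2) * (q (n + 1) : ℤ) :=
      Finset.sum_Icc_succ_top (by omega) _
    have hsum' : ∑ k ∈ Finset.Icc 1 n, (b k : ℤ) * (-1) ^ (k + 1) * (q k : ℤ)
        = ∑ k ∈ Finset.Icc 1 n, (b' k : ℤ) * (-1) ^ (k + 1) * (q k : ℤ) := by
      rw [hsplitb, hsplitb', htop] at hsum
      linarith
    intro k hk
    simp only [Finset.mem_Icc] at hk
    rcases Nat.lt_or_ge k (n + 1) with h | h
    · exact ih hsum' k (Finset.mem_Icc.mpr ⟨hk.1, by omega⟩)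
    · have : k = n + 1 := by omega
      rw [this]; exact htop
end

section
/- Every integer Z (positive, negative, or zero) can be written as Z = Σ_{k=1}^ℓ b_k (-1)^{k-1} F_k, where F_k is the Fibonacci sequence, the digits b_k ∈ {0,1} and no two consecutive digits equal 1. (Extension of Zeckendorf's theorem to all integers via the 'negaFibonacci' base 1, -1, 2, -3, 5, -8, ... .) -/
open Finset

private def negaP (ℓ : ℕ) (Z : ℤ) : Prop :=
  ∃ b : ℕ → ℕ,
    Z = ∑ k ∈ Finset.Icc 1 ℓ, (b k : ℤ) * (-1) ^ (k + 1) * (Nat.fib k : ℤ) ∧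
    (∀ k, b k ≤ 1) ∧ (∀ k, b k = 1 → b (k + 1) = 0) ∧ (∀ k, ℓ < k → b k = 0)

private lemma negaP_mono {ℓ ℓ' : ℕ} {Z : ℤ} (h : ℓ ≤ ℓ') (hP : negaP ℓ Z) : negaP ℓ' Z := by
  obtain ⟨b, hsum, h1, h2, h0⟩ := hP
  refine ⟨b, ?_, h1, h2, fun k hk => h0 k (lt_of_le_of_lt h hk)⟩
  rw [hsum]
  refine Finset.sum_subset ?_ ?_
  · intro x hx
    rw [Finset.mem_Icc] at *
    omega
  · intro x hx hx'
    rw [Finset.mem_Icc] at hx hx'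
    have : b x = 0 := h0 x (by omega)
    simp [this]

private lemma negaP_step (n : ℕ) (Z : ℤ)
    (h : negaP n (Z - (-1) ^ (n + 2 + 1) * (Nat.fib (n + 2) : ℤ))) : negaP (n + 2) Z := by
  obtain ⟨b, hsum, hb1, hb2, hb0⟩ := h
  refine ⟨fun k => if k = n + 2 then 1 else b k, ?_, ?_, ?_, ?_⟩
  · beta_reduce
    rw [show n + 2 = (n + 1) + 1 from rfl, Finset.sum_Icc_succ_top (by omega),
      Finset.sum_Icc_succ_top (by omega)]
    have hcong : ∑ k ∈ Finset.Icc 1 n,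
          ((if k = n + 2 then 1 else b k : ℕ) : ℤ) * (-1) ^ (k + 1) * (Nat.fib k : ℤ)
        = ∑ k ∈ Finset.Icc 1 n, (b k : ℤ) * (-1) ^ (k + 1) * (Nat.fib k : ℤ) := by
      refine Finset.sum_congr rfl fun x hx => ?_
      rw [Finset.mem_Icc] at hx
      rw [if_neg (by omega)]
    rw [hcong, ← hsum, if_neg (by omega), if_pos rfl, hb0 (n + 1) (by omega)]
    push_cast
    ring
  · intro k
    beta_reduce
    split
    · exact le_refl 1
    · exact hb1 k
  · intro k hk
    beta_reduce at hk ⊢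
    by_cases hke : k = n + 2
    · subst hke
      simp only [if_neg (show n + 2 + 1 ≠ n + 2 by omega)]
      exact hb0 _ (by omega)
    · simp only [if_neg hke] at hk
      by_cases hke2 : k + 1 = n + 2
      · exfalso; have := hb0 k (by omega); omega
      · simp only [if_neg hke2]; exact hb2 k hk
  · intro k hk
    beta_reduce
    simp only [if_neg (show k ≠ n + 2 by omega)]
    exact hb0 k (by omega)

private def negaL (ℓ : ℕ) : ℤ :=
  if Even ℓ then -((Nat.fib (ℓ + 1) : ℤ) - 1) else -((Nat.fib ℓ : ℤ) - 1)
private def negaH (ℓ : ℕ) : ℤ :=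
  if Even ℓ then (Nat.fib ℓ : ℤ) else (Nat.fib (ℓ + 1) : ℤ)

private lemma negaP_of_bounds : ∀ ℓ : ℕ, ∀ Z : ℤ, negaL ℓ ≤ Z → Z ≤ negaH ℓ → negaP ℓ Z := by
  intro ℓ
  induction ℓ using Nat.strong_induction_on with
  | _ ℓ ih =>
    match ℓ with
    | 0 =>
      intro Z h1 h2
      simp [negaL, negaH] at h1 h2
      have : Z = 0 := le_antisymm h2 h1
      exact ⟨fun _ => 0, by simp [this], by simp, by simp, by simp⟩
    | 1 =>
      intro Z h1 h2
      simp [negaL, negaH] at h1 h2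
      interval_cases Z
      · exact ⟨fun _ => 0, by simp, by simp, by simp, by simp⟩
      · refine ⟨fun k => if k = 1 then 1 else 0, by simp, ?_, ?_, ?_⟩
        · intro k; beta_reduce; by_cases h : k = 1 <;> simp [h]
        · intro k hk; beta_reduce at hk ⊢
          by_cases h : k = 1
          · simp [h]
          · simp [h] at hk
        · intro k hk; beta_reduce; simp only [if_neg (show k ≠ 1 by omega)]
    | (n + 2) =>
      intro Z h1 h2
      have hfib : (Nat.fib (n + 2) : ℤ) = Nat.fib n + Nat.fib (n + 1) := by
        rw [Nat.fib_add_two]; push_cast; ring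
      have hfib3 : (Nat.fib (n + 3) : ℤ) = Nat.fib (n + 1) + Nat.fib (n + 2) := by
        rw [show n + 3 = (n + 1) + 2 from rfl, Nat.fib_add_two]; push_cast; ring
      have e12 : Nat.fib (n + 1 + 1) = Nat.fib (n + 2) := rfl
      have e23 : Nat.fib (n + 2 + 1) = Nat.fib (n + 3) := rfl
      by_cases hparity : Even n
      · -- n even, n+2 even
        have hodd1 : ¬ Even (n + 1) := by simp [Nat.even_add_one, hparity]
        have hL : negaL (n + 2) = -((Nat.fib (n + 3) : ℤ) - 1) := by
          rw [negaL, if_pos (by simpa [Nat.even_add] using hparity), e23]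
        have hH : negaH (n + 2) = (Nat.fib (n + 2) : ℤ) := by
          rw [negaH, if_pos (by simpa [Nat.even_add] using hparity)]
        rw [hL] at h1; rw [hH] at h2
        by_cases hc : -((Nat.fib (n + 1) : ℤ) - 1) ≤ Z
        · refine negaP_mono (by omega) (ih (n + 1) (by omega) Z ?_ ?_)
          · rw [negaL, if_neg hodd1]; omega
          · rw [negaH, if_neg hodd1, e12]; omega
        · push_neg at hc
          have hpow : ((-1 : ℤ)) ^ (n + 2 + 1) = -1 := by
            obtain ⟨m, rfl⟩ := hparity
            rw [show m + m + 2 + 1 = 2 * m + 3 by ring, pow_add, pow_mul]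
            norm_num
          refine negaP_step n Z ?_
          rw [hpow]
          refine ih n (by omega) _ ?_ ?_
          · rw [negaL, if_pos hparity]; omega
          · rw [negaH, if_pos hparity]; omega
      · -- n odd, n+2 odd
        have hpar1 : Even (n + 1) := by simpa [Nat.even_add_one] using hparity
        have hodd2 : ¬ Even (n + 2) := by simp [Nat.even_add] ; simpa using hparity
        have hL : negaL (n + 2) = -((Nat.fib (n + 2) : ℤ) - 1) := by
          rw [negaL, if_neg hodd2]
        have hH : negaH (n + 2) = (Nat.fib (n + 3) : ℤ) := by
          rw [negaH, if_neg hodd2, e23]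
        rw [hL] at h1; rw [hH] at h2
        by_cases hc : Z ≤ (Nat.fib (n + 1) : ℤ)
        · refine negaP_mono (by omega) (ih (n + 1) (by omega) Z ?_ ?_)
          · rw [negaL, if_pos hpar1, e12]; omega
          · rw [negaH, if_pos hpar1]; omega
        · push_neg at hc
          have hn0 : n ≠ 0 := by rintro rfl; simp at hparity
          have hfn : 1 ≤ (Nat.fib n : ℤ) := by
            exact_mod_cast Nat.fib_pos.mpr (Nat.pos_of_ne_zero hn0)
          have hpow : ((-1 : ℤ)) ^ (n + 2 + 1) = 1 := by
            obtain ⟨m, hm⟩ := hpar1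
            rw [show n + 2 + 1 = (n + 1) + 2 from rfl, hm,
              show m + m + 2 = 2 * (m + 1) by ring, pow_mul]
            norm_num
          refine negaP_step n Z ?_
          rw [hpow]
          refine ih n (by omega) _ ?_ ?_
          · rw [negaL, if_neg hparity]; omega
          · rw [negaH, if_neg hparity]; omega

/-- NegaFibonacci (extension of Zeckendorf to all integers): every integer is
a sum `Σ_{k=1}^ℓ b_k (-1)^{k-1} F_k` with digits `b_k ∈ {0,1}` and no two
consecutive ones. -/
theorem negaFibonacci_expansion (Z : ℤ) :
    ∃ ℓ, ∃ b : ℕ → ℕ,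
      Z = ∑ k ∈ Finset.Icc 1 ℓ, (b k : ℤ) * (-1) ^ (k + 1) * (Nat.fib k : ℤ) ∧
      (∀ k, b k ≤ 1) ∧
      (∀ k, b k = 1 → b (k + 1) = 0) := by
  set ℓ := 2 * (Z.natAbs + 5) with hℓ
  have heven : Even ℓ := ⟨Z.natAbs + 5, by omega⟩
  have hfib : (ℓ : ℕ) ≤ Nat.fib ℓ := Nat.le_fib_self (by omega)
  have hmono : Nat.fib ℓ ≤ Nat.fib (ℓ + 1) := Nat.fib_le_fib_succ
  have hH : Z ≤ negaH ℓ := by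
    rw [negaH, if_pos heven]; omega
  have hL : negaL ℓ ≤ Z := by
    rw [negaL, if_pos heven]; omega
  obtain ⟨b, hsum, h1, h2, _⟩ := negaP_of_bounds ℓ Z hL hH
  exact ⟨ℓ, b, hsum, h1, h2⟩
end

section
/- If a nonzero integer Z has (-α)-admissible expansion Z = Σ_{k=1}^ℓ b_k q*_{k-1} with b_ℓ ≥ 1, then Z > 0 if and only if ℓ is odd. -/
/-- Sign of a (-α)-admissible expansion with nonzero leading digit: the value
is positive iff the length `ℓ` is odd.  (`q k` is the paper's `q_{k-1}`,
signed base `q*_{k-1} = (-1)^{k+1} q k`.) -/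
theorem base_neg_alpha_sign (a q : ℕ → ℕ)
    (ha : ∀ k, 1 ≤ k → 1 ≤ a k)
    (hq0 : q 0 = 0) (hq1 : q 1 = 1)
    (hqrec : ∀ k, q (k + 2) = a (k + 1) * q (k + 1) + q k)
    (ℓ : ℕ) (hℓ : 1 ≤ ℓ) (b : ℕ → ℕ)
    (hble : ∀ k, 1 ≤ k → b k ≤ a k)
    (hbM : ∀ k, 1 ≤ k → b k = a k → b (k + 1) = 0)
    (hlead : 1 ≤ b ℓ)
    (Z : ℤ)
    (hZdef : Z = ∑ k ∈ Finset.Icc 1 ℓ, (b k : ℤ) * (-1) ^ (k + 1) * (q k : ℤ))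
    (hZ : Z ≠ 0) :
    0 < Z ↔ Odd ℓ := by
  -- monotonicity and positivity of q
  have hqmono : ∀ m, (q m : ℤ) ≤ q (m + 1) := by
    intro m
    induction m with
    | zero => simp [hq0, hq1]
    | succ n ih =>
      have h1 : (1 : ℤ) ≤ a (n + 1) := by exact_mod_cast ha (n + 1) (by omega)
      have h2 : (q (n + 2) : ℤ) = (a (n + 1) : ℤ) * q (n + 1) + q n := by
        rw [hqrec n]; push_cast; ring
      have h0 : (0 : ℤ) ≤ q (n + 1) := Int.natCast_nonneg _
      have h0' : (0 : ℤ) ≤ q n := Int.natCast_nonneg _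
      nlinarith
  have hqpos : ∀ m, (1 : ℤ) ≤ q (m + 1) := by
    intro m
    induction m with
    | zero => simp [hq1]
    | succ n ih => exact le_trans ih (hqmono (n + 1))
  set T : ℕ → ℤ := fun m => ∑ k ∈ Finset.Icc 1 m, (b k : ℤ) * (-1) ^ (k + 1) * (q k : ℤ)
    with hTdef
  have hT : ∀ m, T (m + 1) = T m + (b (m + 1) : ℤ) * (-1) ^ (m + 2) * (q (m + 1) : ℤ) := by
    intro m
    exact Finset.sum_Icc_succ_top (by omega) _
  -- main bounds on V m = (-1)^(m+1) * T m
  have hmain : ∀ m, -(q m : ℤ) ≤ (-1) ^ (m + 1) * T m ∧ (-1) ^ (m + 1) * T m ≤ q (m + 1) ∧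
      (1 ≤ b (m + 1) → (-1) ^ (m + 1) * T m ≤ (q (m + 1) : ℤ) - 1) := by
    intro m
    induction m with
    | zero =>
      have hT0 : T 0 = 0 := by simp [hTdef]
      refine ⟨?_, ?_, ?_⟩ <;> simp [hT0, hq0, hq1]
    | succ n ih =>
      obtain ⟨ih1, ih2, ih3⟩ := ih
      have hs : ((-1 : ℤ) ^ (n + 1)) * ((-1 : ℤ) ^ (n + 1)) = 1 := by
        rw [← pow_add]
        exact Even.neg_one_pow ⟨n + 1, by ring⟩
      have hrec : (-1) ^ (n + 2) * T (n + 1)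
          = (b (n + 1) : ℤ) * (q (n + 1)) - (-1) ^ (n + 1) * T n := by
        rw [hT n, pow_succ]
        linear_combination ((b (n + 1) : ℤ) * (q (n + 1))) * hs
      have hb0 : (0 : ℤ) ≤ b (n + 1) := Int.natCast_nonneg _
      have hb1 : (b (n + 1) : ℤ) ≤ a (n + 1) := by exact_mod_cast hble (n + 1) (by omega)
      have hq2 : (q (n + 2) : ℤ) = (a (n + 1) : ℤ) * q (n + 1) + q n := by
        rw [hqrec n]; push_cast; ring
      have hq1' : (1 : ℤ) ≤ q (n + 1) := hqpos n
      have hq0' : (0 : ℤ) ≤ q n := Int.natCast_nonneg _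
      refine ⟨?_, ?_, ?_⟩
      · -- lower bound: b q - V_n ≥ -q_{n+1}
        have hbq : (0 : ℤ) ≤ (b (n + 1) : ℤ) * q (n + 1) :=
          mul_nonneg hb0 (by linarith)
        rw [hrec]; linarith
      · -- upper bound: b q - V_n ≤ a q + q_n = q_{n+2}
        have hbq : (b (n + 1) : ℤ) * q (n + 1) ≤ (a (n + 1) : ℤ) * q (n + 1) :=
          mul_le_mul_of_nonneg_right hb1 (by linarith)
        rw [hrec]; linarith
      · -- sharp upper bound when next digit is nonzero
        intro hnext
        have hne : b (n + 1) ≠ a (n + 1) := by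
          intro h
          have := hbM (n + 1) (by omega) h
          omega
        have hb1' : (b (n + 1) : ℤ) ≤ (a (n + 1) : ℤ) - 1 := by
          have h : b (n + 1) + 1 ≤ a (n + 1) := by
            have := hble (n + 1) (by omega); omega
          have h' : (b (n + 1) : ℤ) + 1 ≤ a (n + 1) := by exact_mod_cast h
          linarith
        have hbq : (b (n + 1) : ℤ) * q (n + 1) ≤ ((a (n + 1) : ℤ) - 1) * q (n + 1) :=
          mul_le_mul_of_nonneg_right hb1' (by linarith)
        rw [hrec]; nlinarith
  -- conclude
  obtain ⟨m, rfl⟩ : ∃ m, ℓ = m + 1 := ⟨ℓ - 1, by omega⟩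
  have hZT : Z = T (m + 1) := hZdef
  obtain ⟨hm1, hm2, hm3⟩ := hmain m
  have hs : ((-1 : ℤ) ^ (m + 1)) * ((-1 : ℤ) ^ (m + 1)) = 1 := by
    rw [← pow_add]
    exact Even.neg_one_pow ⟨m + 1, by ring⟩
  have hrec : (-1) ^ (m + 2) * T (m + 1)
      = (b (m + 1) : ℤ) * (q (m + 1)) - (-1) ^ (m + 1) * T m := by
    rw [hT m, pow_succ]
    linear_combination ((b (m + 1) : ℤ) * (q (m + 1))) * hs
  have hsharp : (-1) ^ (m + 1) * T m ≤ (q (m + 1) : ℤ) - 1 := hm3 hlead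
  have hb1 : (1 : ℤ) ≤ b (m + 1) := by exact_mod_cast hlead
  have hq1' : (1 : ℤ) ≤ q (m + 1) := hqpos m
  have hbq : (q (m + 1) : ℤ) ≤ (b (m + 1) : ℤ) * q (m + 1) := by nlinarith
  have hpos : (1 : ℤ) ≤ (-1) ^ (m + 2) * Z := by
    rw [hZT, hrec]; linarith
  constructor
  · intro hZpos
    by_contra hodd
    have heven : Even (m + 1) := Nat.not_odd_iff_even.mp hodd
    have : Odd (m + 2) := by
      rcases heven with ⟨t, ht⟩
      exact ⟨t, by omega⟩
    rw [this.neg_one_pow] at hpos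
    linarith
  · intro hodd
    have heven : Even (m + 2) := by
      rcases hodd with ⟨t, ht⟩
      exact ⟨t + 1, by omega⟩
    rw [heven.neg_one_pow] at hpos
    linarith
end

section
/- The map sending a natural number N to its α-admissible digit sequence (its Ostrowski expansion with respect to α) is a bijection between the nonnegative integers and the set of finitely-supported α-admissible digit sequences (including the empty/zero sequence representing 0). -/
/-!
Indices follow the statement below: `q k` is the paper's `q_{k-1}` and `c k` is the digit of `q k`.

If the digits `c 1, …, c n` are admissible then `∑_{k ≤ n} c k * q k < q (n + 1)`: a maximal top
digit `c n = a n` forces `c (n - 1) = 0`, and `a n * q n + q (n - 1) = q (n + 1)`. So in an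
admissible expansion the top digit and the rest are the quotient and remainder of a division by
`q n`, which gives uniqueness. Existence runs the same division: write `N < q (n + 2)` as
`d * q (n + 1) + r` with `r < q (n + 1)`; if `d = a (n + 1)` then even `r < q n`, so the
expansion of `r` has the zero digit at `n` that admissibility demands below a maximal digit.
-/

open Finset Function

theorem Nat.eq_and_eq_of_add_mul_eq_add_mul {Q s t d e : ℕ} (hs : s < Q) (ht : t < Q)
    (h : s + d * Q = t + e * Q) : s = t ∧ d = e := by
  have hQ : 0 < Q := by omega
  obtain ⟨hd, hs⟩ := (Nat.div_mod_unique hQ).2 ⟨(mul_comm Q d ▸ rfl : s + Q * d = s + d * Q), hs⟩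
  obtain ⟨he, ht⟩ := (Nat.div_mod_unique hQ).2 ⟨(by rw [h, mul_comm] : t + Q * e = s + d * Q), ht⟩
  exact ⟨hs.symm.trans ht, hd.symm.trans he⟩

namespace Ostrowski

theorem finsum_mul_eq_sum_range {c : ℕ → ℕ} (q : ℕ → ℕ) {n : ℕ} (h : c.support ⊆ range n) :
    ∑ᶠ k, c k * q k = ∑ k ∈ range n, c k * q k :=
  finsum_eq_sum_of_support_subset _ ((support_mul_subset_left _ _).trans h)

theorem sum_range_succ_mul_update (c q : ℕ → ℕ) (m d : ℕ) :
    ∑ k ∈ range (m + 1), update c m d k * q k = ∑ k ∈ range m, c k * q k + d * q m := by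
  rw [sum_range_succ, update_self]
  congr 1
  exact sum_congr rfl fun k hk => by rw [update_of_ne (mem_range.1 hk).ne]

structure IsConvergentDenoms (a q : ℕ → ℕ) : Prop where
  zero : q 0 = 0
  one : q 1 = 1
  add_two : ∀ k, q (k + 2) = a (k + 1) * q (k + 1) + q k

def IsAdmissible (a c : ℕ → ℕ) : Prop :=
  c 1 ≤ a 1 - 1 ∧ (∀ k, 1 ≤ k → c k ≤ a k) ∧ (∀ k, 2 ≤ k → c k = a k → c (k - 1) = 0)

variable {a q : ℕ → ℕ}

namespace IsConvergentDenoms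

theorem add_le (hq : IsConvergentDenoms a q) (ha : ∀ k, 1 ≤ k → 1 ≤ a k) (k : ℕ) :
    q (k + 1) + q k ≤ q (k + 2) := by
  have := Nat.mul_le_mul_right (q (k + 1)) (ha (k + 1) (by omega))
  rw [hq.add_two k]
  omega

theorem lt_add_two (hq : IsConvergentDenoms a q) (ha : ∀ k, 1 ≤ k → 1 ≤ a k) :
    ∀ k, k < q (k + 2)
  | 0 => by
    show 0 < q 2
    have : q 1 + q 0 ≤ q 2 := hq.add_le ha 0
    have := hq.one
    omega
  | 1 => by
    show 1 < q 3
    have : q 1 + q 0 ≤ q 2 := hq.add_le ha 0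
    have : q 2 + q 1 ≤ q 3 := hq.add_le ha 1
    have := hq.one
    omega
  | k + 2 => by
    show k + 2 < q (k + 4)
    have : q (k + 3) + q (k + 2) ≤ q (k + 4) := hq.add_le ha (k + 2)
    have : k < q (k + 2) := hq.lt_add_two ha k
    have : k + 1 < q (k + 3) := hq.lt_add_two ha (k + 1)
    omega

theorem pos (hq : IsConvergentDenoms a q) (ha : ∀ k, 1 ≤ k → 1 ≤ a k) : ∀ k, 0 < q (k + 1)
  | 0 => by simp [hq.one]
  | k + 1 => (Nat.zero_le k).trans_lt (hq.lt_add_two ha k)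

theorem sum_range_succ_lt (hq : IsConvergentDenoms a q) (ha1 : 1 ≤ a 1) {c : ℕ → ℕ}
    (hc : IsAdmissible a c) : ∀ n, ∑ k ∈ range (n + 1), c k * q k < q (n + 1)
  | 0 => by simp [hq.zero, hq.one]
  | 1 => by
    show ∑ k ∈ range 2, c k * q k < q 2
    have hq2 : q 2 = a 1 := by simpa [hq.zero, hq.one] using hq.add_two 0
    have := hc.1
    rw [sum_range_succ, sum_range_one, hq.zero, hq.one, hq2]
    omega
  | n + 2 => by
    have ih₀ : ∑ k ∈ range (n + 1), c k * q k < q (n + 1) := hq.sum_range_succ_lt ha1 hc n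
    have ih₁ : ∑ k ∈ range (n + 2), c k * q k < q (n + 2) := hq.sum_range_succ_lt ha1 hc (n + 1)
    have hrec : q (n + 3) = a (n + 2) * q (n + 2) + q (n + 1) := hq.add_two (n + 1)
    rw [sum_range_succ, hrec]
    rcases (hc.2.1 (n + 2) (by omega)).lt_or_eq with hlt | hmaxd
    · calc _ < q (n + 2) + c (n + 2) * q (n + 2) := by omega
        _ = (c (n + 2) + 1) * q (n + 2) := by ring
        _ ≤ a (n + 2) * q (n + 2) := Nat.mul_le_mul_right _ hlt
        _ ≤ _ := Nat.le_add_right _ _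
    · have hzero : c (n + 1) = 0 := hc.2.2 (n + 2) (by omega) hmaxd
      rw [sum_range_succ, hzero, hmaxd]
      omega

end IsConvergentDenoms

namespace IsAdmissible

theorem update (ha : ∀ k, 1 ≤ k → 1 ≤ a k) {c : ℕ → ℕ} (hc : IsAdmissible a c) {m d : ℕ}
    (hm : 1 ≤ m) (hcm : c (m + 1) = 0) (hd : d ≤ a m) (hd1 : m = 1 → d ≤ a 1 - 1)
    (hdm : 2 ≤ m → d = a m → c (m - 1) = 0) : IsAdmissible a (update c m d) := by
  obtain ⟨hc1, hle, hmax⟩ := hc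
  refine ⟨?_, fun k hk => ?_, fun k hk hka => ?_⟩
  · rcases eq_or_ne m 1 with rfl | hm1
    · simpa using hd1 rfl
    · rwa [update_of_ne hm1.symm]
  · rcases eq_or_ne k m with rfl | hkm
    · rwa [update_self]
    · rw [update_of_ne hkm]
      exact hle k hk
  · rcases eq_or_ne k m with rfl | hkm
    · rw [update_self] at hka
      rw [update_of_ne (by omega)]
      exact hdm hk hka
    · rw [update_of_ne hkm] at hka
      have hk1 : k - 1 ≠ m := by
        rintro rfl
        have := ha (k - 1 + 1) (by omega)
        rw [Nat.sub_add_cancel (by omega)] at hcm this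
        omega
      rw [update_of_ne hk1]
      exact hmax k hk hka

theorem eq_of_sum_range_eq (hq : IsConvergentDenoms a q) (ha1 : 1 ≤ a 1) {c c' : ℕ → ℕ}
    (hc : IsAdmissible a c) (hc' : IsAdmissible a c') (h0 : c 0 = c' 0) :
    ∀ n, ∑ k ∈ range n, c k * q k = ∑ k ∈ range n, c' k * q k → ∀ k < n, c k = c' k
  | 0, _, k, hk => absurd hk k.not_lt_zero
  | 1, _, k, hk => by rwa [Nat.lt_one_iff.1 hk]
  | n + 2, h, k, hk => by
    rw [sum_range_succ, sum_range_succ _ (n + 1)] at h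
    obtain ⟨hsum, hdigit⟩ := Nat.eq_and_eq_of_add_mul_eq_add_mul
      (hq.sum_range_succ_lt ha1 hc n) (hq.sum_range_succ_lt ha1 hc' n) h
    rcases (Nat.lt_succ_iff.1 hk).lt_or_eq with hk | rfl
    · exact eq_of_sum_range_eq hq ha1 hc hc' h0 (n + 1) hsum k hk
    · exact hdigit

theorem eq_of_finsum_eq (hq : IsConvergentDenoms a q) (ha1 : 1 ≤ a 1)
    {c c' : ℕ → ℕ} (hc : IsAdmissible a c) (hc' : IsAdmissible a c') (h0 : c 0 = c' 0)
    (hfin : c.support.Finite) (hfin' : c'.support.Finite)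
    (h : ∑ᶠ k, c k * q k = ∑ᶠ k, c' k * q k) : c = c' := by
  obtain ⟨n, hn⟩ := (hfin.toFinset ∪ hfin'.toFinset).exists_nat_subset_range
  have hsupp : c.support ⊆ range n := fun k hk => hn (by simp [hk])
  have hsupp' : c'.support ⊆ range n := fun k hk => hn (by simp [hk])
  rw [finsum_mul_eq_sum_range q hsupp, finsum_mul_eq_sum_range q hsupp'] at h
  funext k
  rcases lt_or_ge k n with hk | hk
  · exact hc.eq_of_sum_range_eq hq ha1 hc' h0 n h k hk
  · have hout : ∀ {e : ℕ → ℕ}, e.support ⊆ range n → e k = 0 := fun he =>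
      notMem_support.1 fun h => (mem_range.1 (he h)).not_ge hk
    rw [hout hsupp, hout hsupp']

end IsAdmissible

def IsExpansionBelow (a q : ℕ → ℕ) (n N : ℕ) (c : ℕ → ℕ) : Prop :=
  c 0 = 0 ∧ IsAdmissible a c ∧ (∀ k, n ≤ k → c k = 0) ∧ ∑ k ∈ range n, c k * q k = N

namespace IsExpansionBelow

variable {n N : ℕ} {c : ℕ → ℕ}

theorem succ (h : IsExpansionBelow a q n N c) : IsExpansionBelow a q (n + 1) N c := by
  obtain ⟨hc0, hc, hvan, hsum⟩ := h
  refine ⟨hc0, hc, fun k hk => hvan k (by omega), ?_⟩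
  rw [sum_range_succ, hvan n le_rfl, zero_mul, add_zero, hsum]

theorem update (ha : ∀ k, 1 ≤ k → 1 ≤ a k) (h : IsExpansionBelow a q n N c) {d : ℕ}
    (hn : 1 ≤ n) (hd : d ≤ a n) (hd1 : n = 1 → d ≤ a 1 - 1)
    (hdn : 2 ≤ n → d = a n → c (n - 1) = 0) :
    IsExpansionBelow a q (n + 1) (N + d * q n) (update c n d) := by
  obtain ⟨hc0, hc, hvan, hsum⟩ := h
  refine ⟨by rwa [update_of_ne (by omega)], hc.update ha hn (hvan _ (by omega)) hd hd1 hdn,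
    fun k hk => ?_, by rw [sum_range_succ_mul_update, hsum]⟩
  rw [update_of_ne (by omega)]
  exact hvan k (by omega)

end IsExpansionBelow

theorem exists_isExpansionBelow (hq : IsConvergentDenoms a q) (ha : ∀ k, 1 ≤ k → 1 ≤ a k) :
    ∀ n, ∀ N < q n, ∃ c, IsExpansionBelow a q n N c
  | 0, N, hN => by simp [hq.zero] at hN
  | 1, N, hN => by
    obtain rfl : N = 0 := by rw [hq.one] at hN; omega
    exact ⟨0, rfl, ⟨Nat.zero_le _, fun _ _ => Nat.zero_le _, fun _ _ _ => rfl⟩,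
      fun _ _ => rfl, by simp⟩
  | n + 2, N, hN => by
    have hQ : 0 < q (n + 1) := hq.pos ha n
    by_cases hNa : N < a (n + 1) * q (n + 1)
    · have hd : N / q (n + 1) < a (n + 1) := (Nat.div_lt_iff_lt_mul hQ).2 hNa
      obtain ⟨c, hc⟩ := exists_isExpansionBelow hq ha (n + 1) (N % q (n + 1)) (Nat.mod_lt _ hQ)
      have hd1 : n + 1 = 1 → N / q (n + 1) ≤ a 1 - 1 := fun h => by
        obtain rfl : n = 0 := by omega
        exact Nat.le_sub_one_of_lt hd
      have := hc.update ha (by omega) hd.le hd1 fun _ h => absurd h hd.ne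
      rw [Nat.mod_add_div'] at this
      exact ⟨_, this⟩
    · have hr : N - a (n + 1) * q (n + 1) < q n := by rw [hq.add_two n] at hN; omega
      have hn : n ≠ 0 := by rintro rfl; rw [hq.zero] at hr; omega
      obtain ⟨c, hc⟩ := exists_isExpansionBelow hq ha n _ hr
      have := hc.succ.update ha (by omega) le_rfl (fun h => absurd h (by omega))
        fun _ _ => hc.2.2.1 n le_rfl
      rw [Nat.sub_add_cancel (not_lt.1 hNa)] at this
      exact ⟨_, this⟩

theorem exists_admissible_finsum_eq (hq : IsConvergentDenoms a q) (ha : ∀ k, 1 ≤ k → 1 ≤ a k)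
    (N : ℕ) : ∃ c : ℕ → ℕ, c 0 = 0 ∧ c.support.Finite ∧ IsAdmissible a c ∧
      ∑ᶠ k, c k * q k = N := by
  obtain ⟨c, hc0, hc, hvan, hsum⟩ := exists_isExpansionBelow hq ha (N + 2) N (hq.lt_add_two ha N)
  have hsupp : c.support ⊆ range (N + 2) := fun k hk =>
    mem_range.2 (not_le.1 fun h => hk (hvan k h))
  exact ⟨c, hc0, (range _).finite_toSet.subset hsupp, hc,
    (finsum_mul_eq_sum_range q hsupp).trans hsum⟩

end Ostrowski

open Ostrowski in
/-- The value map is a bijection between the finitely supported α-admissible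
digit sequences and the nonnegative integers.  (`q k` is the paper's
`q_{k-1}`; digits are indexed from 1, with `c 0 = 0`.) -/
theorem base_alpha_bijection (a q : ℕ → ℕ)
    (ha : ∀ k, 1 ≤ k → 1 ≤ a k)
    (hq0 : q 0 = 0) (hq1 : q 1 = 1)
    (hqrec : ∀ k, q (k + 2) = a (k + 1) * q (k + 1) + q k) :
    Function.Bijective
      (fun c : {c : ℕ → ℕ //
          c 0 = 0 ∧ (Function.support c).Finite ∧
          c 1 ≤ a 1 - 1 ∧ (∀ k, 1 ≤ k → c k ≤ a k) ∧
          (∀ k, 2 ≤ k → c k = a k → c (k - 1) = 0)} =>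
        ∑ᶠ k, c.1 k * q k) := by
  have hq : IsConvergentDenoms a q := ⟨hq0, hq1, hqrec⟩
  refine ⟨fun ⟨c, hc0, hfin, hc⟩ ⟨c', hc0', hfin', hc'⟩ h => Subtype.ext ?_, fun N => ?_⟩
  · exact IsAdmissible.eq_of_finsum_eq hq (ha 1 le_rfl) hc hc' (hc0.trans hc0'.symm) hfin hfin' h
  · obtain ⟨c, hc0, hfin, hc, hsum⟩ := exists_admissible_finsum_eq hq ha N
    exact ⟨⟨c, hc0, hfin, hc⟩, hsum⟩
end

section
/- The map sending an integer Z to its (-α)-admissible digit sequence is a bijection between the integers ℤ and the set of finitely-supported (-α)-admissible digit sequences (with the zero sequence representing 0). Equivalently, the value map (b_k) ↦ Σ_k b_k (-1)^{k-1} q_{k-1} is a bijection from finitely-supported (-α)-admissible sequences onto ℤ. -/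
/-!
Reflect the value by `Z ↦ 1 - Z` at even levels (`normValue`). Then the admissible digit strings
on positions `≤ n` take exactly the values in `(-q n, q (n+1)]`, and those that may be followed by
a nonzero digit take exactly the values in `(-q n, q (n+1) - q n]`, an interval of length
`q (n+1)`. Appending the digit `j` at position `n + 1` maps `N` to `j q (n+1) + 1 - N`, so the
translates of the reflected short interval by `j q (n+1)`, `1 ≤ j ≤ a (n+1)`, together with the
reflected long interval tile the next level's interval. Hence the new digit is forced by the value
(injectivity) and can be read off by Euclidean division (surjectivity).
-/

open Finset

namespace NegOstrowski

structure IsDenominatorSeq (a q : ℕ → ℕ) : Prop where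
  one_le_a : ∀ k, 1 ≤ k → 1 ≤ a k
  q_zero : q 0 = 0
  q_one : q 1 = 1
  q_add_two : ∀ k, q (k + 2) = a (k + 1) * q (k + 1) + q k

structure IsAdmissible (a b : ℕ → ℕ) : Prop where
  zero : b 0 = 0
  le : ∀ k, 1 ≤ k → b k ≤ a k
  succ_eq_zero_of_eq : ∀ k, 1 ≤ k → b k = a k → b (k + 1) = 0

/-- The value `∑_{k ≤ n} b k (-1)^(k+1) q k` of the digits up to position `n` when `n` is odd,
and one minus it when `n` is even. -/
def normValue (q b : ℕ → ℕ) : ℕ → ℤ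
  | 0 => 1
  | n + 1 => b (n + 1) * q (n + 1) + 1 - normValue q b n

variable {a q b c : ℕ → ℕ}

namespace IsDenominatorSeq

theorem add_le (hq : IsDenominatorSeq a q) (k : ℕ) : q (k + 1) + q k ≤ q (k + 2) := by
  rw [hq.q_add_two]
  gcongr
  exact le_mul_of_one_le_left (Nat.zero_le _) (hq.one_le_a _ k.succ_pos)

theorem succ_le_add_two (hq : IsDenominatorSeq a q) (k : ℕ) : q (k + 1) ≤ q (k + 2) :=
  le_of_add_le_left (hq.add_le k)

theorem succ_pos (hq : IsDenominatorSeq a q) : ∀ k, 0 < q (k + 1)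
  | 0 => by rw [hq.q_one]; exact one_pos
  | k + 1 => (hq.succ_pos k).trans_le (hq.succ_le_add_two k)

theorem le_q_add_two (hq : IsDenominatorSeq a q) : ∀ k, k + 1 ≤ q (k + 2)
  | 0 => hq.succ_pos 1
  | k + 1 => by
    have : q (k + 2) + q (k + 1) ≤ q (k + 3) := hq.add_le (k + 1)
    have := hq.le_q_add_two k
    have := hq.succ_pos k
    show k + 2 ≤ q (k + 3)
    omega

theorem exists_odd_mem_Ioc (hq : IsDenominatorSeq a q) (Z : ℤ) :
    ∃ n, Odd n ∧ Z ∈ Set.Ioc (-(q n : ℤ)) (q (n + 1)) := by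
  set m := Z.natAbs with hm
  have h₁ : 2 * m + 2 ≤ q (2 * m + 3) := hq.le_q_add_two (2 * m + 1)
  have h₂ : q (2 * m + 3) ≤ q (2 * m + 3 + 1) := hq.succ_le_add_two (2 * m + 2)
  exact ⟨2 * m + 3, ⟨m + 1, by ring⟩, by omega, by omega⟩

end IsDenominatorSeq

theorem IsAdmissible.lt_of_pos (hb : IsAdmissible a b) {n : ℕ} (h : 0 < b (n + 1)) :
    n = 0 ∨ b n < a n := by
  rcases n.eq_zero_or_pos with rfl | hn
  · exact Or.inl rfl
  · exact Or.inr <| (hb.le n hn).lt_of_ne fun he => by simp [hb.succ_eq_zero_of_eq n hn he] at h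

theorem IsAdmissible.update (hb : IsAdmissible a b) {n j : ℕ} (hbn : ∀ k, n < k → b k = 0)
    (hj : j ≤ a (n + 1)) (hfree : 0 < j → n = 0 ∨ b n < a n) :
    IsAdmissible a (Function.update b (n + 1) j) where
  zero := by rw [Function.update_of_ne (by omega)]; exact hb.zero
  le k hk := by
    rcases eq_or_ne k (n + 1) with rfl | hkn
    · simpa
    · rw [Function.update_of_ne hkn]; exact hb.le k hk
  succ_eq_zero_of_eq k hk he := by
    rcases eq_or_ne k (n + 1) with rfl | hkn
    · rw [Function.update_of_ne (by omega)]; exact hbn _ (by omega)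
    rw [Function.update_of_ne hkn] at he
    rcases eq_or_ne k n with rfl | hkn'
    · rw [Function.update_self]
      by_contra hj0
      rcases hfree (Nat.pos_of_ne_zero hj0) with h | h <;> omega
    · rw [Function.update_of_ne (by omega)]; exact hb.succ_eq_zero_of_eq k hk he

theorem normValue_succ (q b : ℕ → ℕ) (n : ℕ) :
    normValue q b (n + 1) = b (n + 1) * q (n + 1) + 1 - normValue q b n := rfl

theorem normValue_congr {n : ℕ} (h : ∀ k ≤ n, b k = c k) :
    normValue q b n = normValue q c n := by
  induction n with
  | zero => rfl
  | succ n ih => rw [normValue_succ, normValue_succ, h _ le_rfl, ih fun k hk => h k (by omega)]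

theorem two_mul_sum_range_sub_one (hb0 : b 0 = 0) (n : ℕ) :
    2 * ∑ k ∈ range (n + 1), (b k : ℤ) * (-1) ^ (k + 1) * q k - 1 =
      (-1) ^ (n + 1) * (2 * normValue q b n - 1) := by
  induction n with
  | zero => simp [normValue, hb0]
  | succ n ih =>
    rw [sum_range_succ, normValue_succ]
    linear_combination ih

theorem finsum_eq_normValue (hb0 : b 0 = 0) {n : ℕ} (hn : Odd n)
    (hbn : ∀ k, n < k → b k = 0) :
    ∑ᶠ k, (b k : ℤ) * (-1) ^ (k + 1) * q k = normValue q b n := by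
  have hsum := two_mul_sum_range_sub_one (q := q) hb0 n
  rw [hn.add_one.neg_one_pow, one_mul] at hsum
  rw [finsum_eq_sum_of_support_subset _ (s := range (n + 1)) fun k hk => ?_]
  · linarith
  · by_contra hkn
    simp [hbn k (by simpa using hkn)] at hk

theorem normValue_mem_Ioc (hq : IsDenominatorSeq a q) (hb : IsAdmissible a b) (n : ℕ) :
    normValue q b n ∈ Set.Ioc (-(q n : ℤ)) (q (n + 1)) ∧
      (n = 0 ∨ b n < a n → normValue q b n ≤ q (n + 1) - q n) := by
  induction n with
  | zero => simp [normValue, hq.q_zero, hq.q_one]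
  | succ n ih =>
    obtain ⟨⟨hlo, hhi⟩, hfree⟩ := ih
    have hQ : (0 : ℤ) < q (n + 1) := by exact_mod_cast hq.succ_pos n
    have hrec : (q (n + 2) : ℤ) = a (n + 1) * q (n + 1) + q n := by exact_mod_cast hq.q_add_two n
    have ha : (1 : ℤ) ≤ a (n + 1) := by exact_mod_cast hq.one_le_a _ n.succ_pos
    have hja : (b (n + 1) : ℤ) ≤ a (n + 1) := by exact_mod_cast hb.le _ n.succ_pos
    rw [normValue_succ]
    rcases Nat.eq_zero_or_pos (b (n + 1)) with hj | hj
    · rw [hj]; push_cast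
      exact ⟨⟨by linarith, by nlinarith⟩, fun _ => by nlinarith⟩
    · have hN := hfree (hb.lt_of_pos hj)
      have hj1 : (1 : ℤ) ≤ b (n + 1) := by exact_mod_cast hj
      refine ⟨⟨by nlinarith, by nlinarith⟩, fun h => ?_⟩
      have hlt : b (n + 1) + 1 ≤ a (n + 1) := by omega
      have : (b (n + 1) : ℤ) + 1 ≤ a (n + 1) := by exact_mod_cast hlt
      nlinarith

theorem normValue_lt_of_lt (hq : IsDenominatorSeq a q) (hb : IsAdmissible a b)
    (hc : IsAdmissible a c) {n : ℕ} (h : b (n + 1) < c (n + 1)) :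
    normValue q b (n + 1) < normValue q c (n + 1) := by
  have hB := (normValue_mem_Ioc hq hb n).1.1
  have hC := (normValue_mem_Ioc hq hc n).2 (hc.lt_of_pos (by omega))
  have : ((b (n + 1) : ℤ) + 1) * q (n + 1) ≤ c (n + 1) * q (n + 1) :=
    mul_le_mul_of_nonneg_right (by exact_mod_cast h) (by positivity)
  rw [normValue_succ, normValue_succ]
  linarith

theorem eq_of_normValue_eq (hq : IsDenominatorSeq a q) (hb : IsAdmissible a b)
    (hc : IsAdmissible a c) : ∀ n, normValue q b n = normValue q c n → ∀ k ≤ n, b k = c k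
  | 0, _, k, hk => by rw [Nat.le_zero.1 hk, hb.zero, hc.zero]
  | n + 1, h, k, hk => by
    have htop : b (n + 1) = c (n + 1) := by
      rcases lt_trichotomy (b (n + 1)) (c (n + 1)) with hlt | heq | hgt
      · exact absurd h (normValue_lt_of_lt hq hb hc hlt).ne
      · exact heq
      · exact absurd h (normValue_lt_of_lt hq hc hb hgt).ne'
    rcases Nat.le_succ_iff.1 hk with hk | rfl
    · refine eq_of_normValue_eq hq hb hc n ?_ k hk
      rw [normValue_succ, normValue_succ, htop] at h
      linarith
    · exact htop

theorem exists_digit {Q p Z : ℤ} {A : ℕ} (hQ : 0 < Q) (hp : 0 ≤ p) (hA : 1 ≤ A)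
    (hZ : Z ∈ Set.Ioc (-Q) (A * Q + p)) :
    ∃ j : ℕ, j ≤ A ∧ ∃ N ∈ Set.Ioc (-p) Q, Z = j * Q + 1 - N ∧
      (0 < j → N ≤ Q - p) ∧ (Z ≤ (A - 1) * Q + p → j < A) := by
  obtain ⟨hZlo, hZhi⟩ := hZ
  rcases le_or_gt Z p with hZp | hZp
  · exact ⟨0, Nat.zero_le _, 1 - Z, ⟨by linarith, by linarith⟩, by ring, by simp,
      fun _ => hA⟩
  obtain ⟨j, ⟨hlo, hhi⟩, -⟩ := existsUnique_sub_zsmul_mem_Ioc hQ Z (p - Q)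
  rw [smul_eq_mul] at hlo hhi
  have hj : 0 < j := pos_of_mul_pos_left (by linarith : 0 < j * Q) hQ.le
  lift j to ℕ using hj.le
  have hjA : (j : ℤ) < A + 1 := lt_of_mul_lt_mul_right (by linarith) hQ.le
  refine ⟨j, by exact_mod_cast Int.lt_add_one_iff.1 hjA, 1 - (Z - j * Q),
    ⟨by linarith, by linarith⟩, by ring, fun _ => by linarith, fun h => ?_⟩
  exact_mod_cast (lt_of_mul_lt_mul_right (by linarith) hQ.le : (j : ℤ) < A)

theorem exists_normValue_eq (hq : IsDenominatorSeq a q) :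
    ∀ n, ∀ Z ∈ Set.Ioc (-(q n : ℤ)) (q (n + 1)), ∃ b, IsAdmissible a b ∧
      (∀ k, n < k → b k = 0) ∧ normValue q b n = Z ∧
      (Z ≤ q (n + 1) - q n → n = 0 ∨ b n < a n)
  | 0, Z, hZ => by
    obtain rfl : Z = 1 := by
      simp only [Set.mem_Ioc, hq.q_zero, hq.q_one, Nat.cast_zero, Nat.cast_one] at hZ
      omega
    exact ⟨0, ⟨rfl, fun _ _ => Nat.zero_le _, fun _ _ _ => rfl⟩, fun _ _ => rfl, rfl,
      fun _ => Or.inl rfl⟩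
  | n + 1, Z, hZ => by
    have hrec : (q (n + 2) : ℤ) = a (n + 1) * q (n + 1) + q n := by exact_mod_cast hq.q_add_two n
    rw [hrec] at hZ
    obtain ⟨j, hja, N, hN, rfl, hjfree, hjlt⟩ := exists_digit (by exact_mod_cast hq.succ_pos n)
      (q n).cast_nonneg (hq.one_le_a _ n.succ_pos) hZ
    obtain ⟨b, hb, hbn, rfl, hfree⟩ := exists_normValue_eq hq n N hN
    refine ⟨Function.update b (n + 1) j, hb.update hbn hja fun hj => hfree (hjfree hj),
      fun k hk => ?_, ?_, fun h => Or.inr ?_⟩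
    · rw [Function.update_of_ne (by omega)]; exact hbn k (by omega)
    · rw [normValue_succ, Function.update_self,
        normValue_congr fun k hk => Function.update_of_ne (by omega) _ _]
    · rw [Function.update_self]
      exact hjlt (by rw [hrec] at h; linarith)

theorem exists_forall_lt_eq_zero {f : ℕ → ℕ} (hf : (Function.support f).Finite) :
    ∃ N, ∀ k, N < k → f k = 0 := by
  obtain ⟨N, hN⟩ := hf.bddAbove
  exact ⟨N, fun k hk => Function.notMem_support.1 fun h => (hN h).not_gt hk⟩

end NegOstrowski

open NegOstrowski in
/-- The value map `(b_k) ↦ Σ b_k (-1)^{k-1} q_{k-1}` is a bijection between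
the finitely supported (-α)-admissible digit sequences and ℤ.  (`q k` is the
paper's `q_{k-1}`; digits are indexed from 1, with `b 0 = 0`.) -/
theorem base_neg_alpha_bijection (a q : ℕ → ℕ)
    (ha : ∀ k, 1 ≤ k → 1 ≤ a k)
    (hq0 : q 0 = 0) (hq1 : q 1 = 1)
    (hqrec : ∀ k, q (k + 2) = a (k + 1) * q (k + 1) + q k) :
    Function.Bijective
      (fun b : {b : ℕ → ℕ //
          b 0 = 0 ∧ (Function.support b).Finite ∧
          (∀ k, 1 ≤ k → b k ≤ a k) ∧
          (∀ k, 1 ≤ k → b k = a k → b (k + 1) = 0)} =>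
        ∑ᶠ k, (b.1 k : ℤ) * (-1) ^ (k + 1) * (q k : ℤ)) := by
  have hq : IsDenominatorSeq a q := ⟨ha, hq0, hq1, hqrec⟩
  constructor
  · rintro ⟨b, hb0, hbfin, hble, hbeq⟩ ⟨c, hc0, hcfin, hcle, hceq⟩ h
    obtain ⟨Nb, hNb⟩ := exists_forall_lt_eq_zero hbfin
    obtain ⟨Nc, hNc⟩ := exists_forall_lt_eq_zero hcfin
    have hn : Odd (2 * (Nb + Nc) + 1) := odd_two_mul_add_one _
    dsimp only at h
    rw [finsum_eq_normValue hb0 hn fun k hk => hNb k (by omega),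
      finsum_eq_normValue hc0 hn fun k hk => hNc k (by omega)] at h
    have hle := eq_of_normValue_eq hq ⟨hb0, hble, hbeq⟩ ⟨hc0, hcle, hceq⟩ _ h
    refine Subtype.ext <| funext fun k => ?_
    dsimp only
    rcases le_or_gt k (2 * (Nb + Nc) + 1) with hk | hk
    · exact hle k hk
    · rw [hNb k (by omega), hNc k (by omega)]
  · intro Z
    obtain ⟨n, hn, hZ⟩ := hq.exists_odd_mem_Ioc Z
    obtain ⟨b, hb, hbn, rfl, -⟩ := exists_normValue_eq hq n Z hZ
    have hfin : (Function.support b).Finite :=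
      (Set.finite_Iic n).subset fun k hk => not_lt.1 fun hnk => hk (hbn k hnk)
    exact ⟨⟨b, hb.zero, hfin, hb.le, hb.succ_eq_zero_of_eq⟩,
      finsum_eq_normValue hb.zero hn hbn⟩
end
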